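/- Let A be the 3-dimensional commutative ℂ-algebra with basis e₁, e₂, e₃ and nonzero products e₁e₁ = e₂ and e₂e₂ = e₃ (all other products of basis vectors are zero). Then a ℂ-linear map φ : A → A is an algebra automorphism of A if and only if there exist x, z ∈ ℂ with x ≠ 0 such that φ(e₁) = x e₁ + z e₃, φ(e₂) = x² e₂, and φ(e₃) = x⁴ e₃. -/

import Mathlib

/-!
Since `e₂ = e₁²` and `e₃ = e₂²`, a multiplicative linear map is determined on `e₂, e₃` by
`a := φ(e₁)`: `φ(e₂) = (0, a₀², a₁²)` and `φ(e₃) = (0, 0, a₀⁴)`. Injectivity forces `a₀ ≠ 0`, and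
then `e₁e₂ = 0` forces `a₁ = 0`. Conversely, such a `φ` is given by a lower triangular matrix of
determinant `x⁷`, and multiplicativity is a direct computation.
-/

/-- The multiplication of the 3-dimensional commutative algebra with
`e₁e₁ = e₂`, `e₂e₂ = e₃` (all other products of basis vectors zero),
on the carrier `Fin 3 → ℂ`. -/
def mulB (u v : Fin 3 → ℂ) : Fin 3 → ℂ :=
  ![0, u 0 * v 0, u 1 * v 1]

local notation "e₁" => (![1, 0, 0] : Fin 3 → ℂ)
local notation "e₂" => (![0, 1, 0] : Fin 3 → ℂ)
local notation "e₃" => (![0, 0, 1] : Fin 3 → ℂ)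

@[simp] lemma mulB_apply_zero (u v : Fin 3 → ℂ) : mulB u v 0 = 0 := rfl
@[simp] lemma mulB_apply_one (u v : Fin 3 → ℂ) : mulB u v 1 = u 0 * v 0 := rfl
@[simp] lemma mulB_apply_two (u v : Fin 3 → ℂ) : mulB u v 2 = u 1 * v 1 := rfl

lemma mulB_e₁_e₁ : mulB e₁ e₁ = e₂ := by ext i; fin_cases i <;> simp
lemma mulB_e₂_e₂ : mulB e₂ e₂ = e₃ := by ext i; fin_cases i <;> simp
lemma mulB_e₁_e₂ : mulB e₁ e₂ = 0 := by ext i; fin_cases i <;> simp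

section MapMulB

variable {φ : (Fin 3 → ℂ) →ₗ[ℂ] (Fin 3 → ℂ)}

lemma map_e₂_of_map_mulB (hφ : ∀ u v, φ (mulB u v) = mulB (φ u) (φ v)) :
    φ e₂ = ![0, φ e₁ 0 ^ 2, φ e₁ 1 ^ 2] := by
  rw [← mulB_e₁_e₁, hφ]; ext i; fin_cases i <;> simp [sq]

lemma map_e₃_of_map_mulB (hφ : ∀ u v, φ (mulB u v) = mulB (φ u) (φ v)) :
    φ e₃ = ![0, 0, φ e₁ 0 ^ 4] := by
  rw [← mulB_e₂_e₂, hφ, map_e₂_of_map_mulB hφ]; ext i; fin_cases i <;> simp; ring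

lemma exists_of_injective_of_map_mulB (hφ : ∀ u v, φ (mulB u v) = mulB (φ u) (φ v))
    (hinj : Function.Injective φ) :
    ∃ x z : ℂ, x ≠ 0 ∧ φ e₁ = ![x, 0, z] ∧ φ e₂ = ![0, x ^ 2, 0] ∧ φ e₃ = ![0, 0, x ^ 4] := by
  have hx : φ e₁ 0 ≠ 0 := by
    intro h0
    have : φ e₃ = φ 0 := by
      rw [map_e₃_of_map_mulB hφ, h0, map_zero]; ext i; fin_cases i <;> simp
    simpa using congrFun (hinj this) 2
  have hy : φ e₁ 1 = 0 := by
    have : φ e₁ 1 * φ e₁ 0 ^ 2 = 0 := by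
      simpa [mulB_e₁_e₂, map_e₂_of_map_mulB hφ] using congrFun (hφ e₁ e₂) 2
    simpa [hx] using this
  refine ⟨φ e₁ 0, φ e₁ 2, hx, ?_, ?_, map_e₃_of_map_mulB hφ⟩
  · ext i; fin_cases i <;> simp [hy]
  · rw [map_e₂_of_map_mulB hφ, hy]; simp

end MapMulB

def mulBAut (x z : ℂ) : (Fin 3 → ℂ) →ₗ[ℂ] (Fin 3 → ℂ) :=
  Matrix.toLin' !![x, 0, 0; 0, x ^ 2, 0; z, 0, x ^ 4]

lemma mulBAut_apply (x z : ℂ) (u : Fin 3 → ℂ) :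
    mulBAut x z u = ![x * u 0, x ^ 2 * u 1, z * u 0 + x ^ 4 * u 2] := by
  ext i; fin_cases i <;> simp [mulBAut, Matrix.mulVec, dotProduct, Fin.sum_univ_three]

lemma mulBAut_bijective {x : ℂ} (hx : x ≠ 0) (z : ℂ) : Function.Bijective (mulBAut x z) := by
  have hdet : (!![x, 0, 0; 0, x ^ 2, 0; z, 0, x ^ 4]).det = x ^ 7 := by
    simp [Matrix.det_fin_three]; ring
  have hinj : Function.Injective (mulBAut x z) := by
    rw [mulBAut, Matrix.toLin'_apply', Matrix.coe_mulVecLin, Matrix.mulVec_injective_iff_isUnit,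
      Matrix.isUnit_iff_isUnit_det, hdet]
    exact (pow_ne_zero 7 hx).isUnit
  exact ⟨hinj, LinearMap.injective_iff_surjective.mp hinj⟩

lemma mulBAut_mulB (x z : ℂ) (u v : Fin 3 → ℂ) :
    mulBAut x z (mulB u v) = mulB (mulBAut x z u) (mulBAut x z v) := by
  simp only [mulBAut_apply]; ext i; fin_cases i <;> simp <;> ring

lemma map_eq_smul_add_smul_add_smul {M : Type*} [AddCommMonoid M] [Module ℂ M]
    (φ : (Fin 3 → ℂ) →ₗ[ℂ] M) (u : Fin 3 → ℂ) : φ u = u 0 • φ e₁ + u 1 • φ e₂ + u 2 • φ e₃ := by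
  have hu : u = u 0 • e₁ + u 1 • e₂ + u 2 • e₃ := by ext i; fin_cases i <;> simp
  conv_lhs => rw [hu]
  simp only [map_add, map_smul]

lemma eq_mulBAut {φ : (Fin 3 → ℂ) →ₗ[ℂ] (Fin 3 → ℂ)} {x z : ℂ} (h₁ : φ e₁ = ![x, 0, z])
    (h₂ : φ e₂ = ![0, x ^ 2, 0]) (h₃ : φ e₃ = ![0, 0, x ^ 4]) : φ = mulBAut x z := by
  refine LinearMap.ext fun u => ?_
  rw [map_eq_smul_add_smul_add_smul, h₁, h₂, h₃, mulBAut_apply]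
  ext i; fin_cases i <;> simp <;> ring

/-- A linear map `φ` of the algebra `e₁e₁ = e₂, e₂e₂ = e₃` is an algebra automorphism iff
`φ(e₁) = x e₁ + z e₃`, `φ(e₂) = x² e₂`, `φ(e₃) = x⁴ e₃` for some `x, z ∈ ℂ` with `x ≠ 0`. -/
theorem stmt13 (φ : (Fin 3 → ℂ) →ₗ[ℂ] (Fin 3 → ℂ)) :
    (Function.Bijective φ ∧ ∀ u v : Fin 3 → ℂ, φ (mulB u v) = mulB (φ u) (φ v)) ↔
    (∃ x z : ℂ, x ≠ 0 ∧
      φ ![1, 0, 0] = ![x, 0, z] ∧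
      φ ![0, 1, 0] = ![0, x ^ 2, 0] ∧
      φ ![0, 0, 1] = ![0, 0, x ^ 4]) := by
  refine ⟨fun ⟨hbij, hφ⟩ => exists_of_injective_of_map_mulB hφ hbij.injective, ?_⟩
  rintro ⟨x, z, hx, h₁, h₂, h₃⟩
  obtain rfl := eq_mulBAut h₁ h₂ h₃
  exact ⟨mulBAut_bijective hx z, mulBAut_mulB x z⟩
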